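/- If t is a positive integer with t ≡ 7 (mod 12), then c₃(t) = (t³ − 16t² + 73t − 70)/6. -/

import Mathlib

/-- A 3×3 magic square with entries bounded above (strictly) by `t`: pairwise distinct
positive integer entries less than `t`, with all row sums, column sums, and both main
diagonal sums equal to one another. -/
def IsBoundedMagicSquare3 (t : ℕ) (M : Matrix (Fin 3) (Fin 3) ℕ) : Prop :=
  (∀ i j, 0 < M i j ∧ M i j < t) ∧
  (Function.Injective fun p : Fin 3 × Fin 3 => M p.1 p.2) ∧
  ∃ s, (∀ i, ∑ j, M i j = s) ∧ (∀ j, ∑ i, M i j = s) ∧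
    M 0 0 + M 1 1 + M 2 2 = s ∧ M 0 2 + M 1 1 + M 2 0 = s

/-- The number of 3×3 magic squares all of whose entries are less than `t`. -/
noncomputable def c3 (t : ℕ) : ℕ :=
  Set.ncard {M : Matrix (Fin 3) (Fin 3) ℕ | IsBoundedMagicSquare3 t M}

/-!
By Lucas' parametrisation, a 3×3 matrix with all lines summing to `s` is `magicOf a b c`: its
centre is `c = s / 3` and its entries are `c`, `c ± a`, `c ± b`, `c ± (a + b)`, `c ± (a - b)`.
These are pairwise distinct iff `p = |a|` and `q = |b|` are positive and `(p, q)` avoids the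
lines `p = q`, `p = 2q`, `q = 2p`; they lie in `(0, t)` iff `p + q < c < t - p - q`. Counting the
two signs of `a` and `b` and the admissible centres, `c₃(t)` is four times the sum of
`t - 1 - 2(p + q)` over the triangle `p, q ≥ 1`, `p + q ≤ m = ⌊(t - 2)/2⌋`, minus its sums over
the three lines. These are polynomials in `t`, `m`, `⌊m/2⌋`, `⌊m/3⌋`, and for `t ≡ 7 (mod 12)`
the floors are affine in `t`.
-/

open Finset

def IsMagic {R : Type*} [AddCommMonoid R] (M : Matrix (Fin 3) (Fin 3) R) (s : R) : Prop :=
  (∀ i, ∑ j, M i j = s) ∧ (∀ j, ∑ i, M i j = s) ∧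
    M 0 0 + M 1 1 + M 2 2 = s ∧ M 0 2 + M 1 1 + M 2 0 = s

theorem isMagic_map_natCast {M : Matrix (Fin 3) (Fin 3) ℕ} {s : ℕ} :
    IsMagic (M.map ((↑) : ℕ → ℤ)) s ↔ IsMagic M s := by
  simp only [IsMagic, Matrix.map_apply]
  norm_cast

def magicOf (a b c : ℤ) : Matrix (Fin 3) (Fin 3) ℤ :=
  !![c + a, c - a - b, c + b; c - a + b, c, c + a - b; c - b, c + a + b, c - a]

theorem isMagic_magicOf (a b c : ℤ) : IsMagic (magicOf a b c) (3 * c) := by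
  refine ⟨fun i => ?_, fun j => ?_, ?_, ?_⟩
  · fin_cases i <;> simp [magicOf, Fin.sum_univ_three] <;> ring
  · fin_cases j <;> simp [magicOf, Fin.sum_univ_three] <;> ring
  · simp [magicOf]; ring
  · simp [magicOf]; ring

theorem IsMagic.eq_magicOf {M : Matrix (Fin 3) (Fin 3) ℤ} {s : ℤ} (h : IsMagic M s) :
    M = magicOf (M 0 0 - M 1 1) (M 0 2 - M 1 1) (M 1 1) := by
  obtain ⟨hrow, hcol, hdiag, hanti⟩ := h
  have r0 := hrow 0; have r1 := hrow 1; have r2 := hrow 2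
  have c0 := hcol 0; have c1 := hcol 1; have c2 := hcol 2
  simp only [Fin.sum_univ_three] at r0 r1 r2 c0 c1 c2
  -- The middle row, middle column and both diagonals cover the centre four times and every
  -- other entry once, so `4 * s = 3 * s + 3 * M 1 1`.
  have hs : s = 3 * M 1 1 := by linarith
  ext i j
  fin_cases i <;> fin_cases j <;> simp [magicOf] <;> linarith

theorem magicOf_inj {a b c a' b' c' : ℤ} :
    magicOf a b c = magicOf a' b' c' ↔ a = a' ∧ b = b' ∧ c = c' := by
  refine ⟨fun h => ?_, by rintro ⟨rfl, rfl, rfl⟩; rfl⟩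
  have h00 := congrFun (congrFun h 0) 0
  have h02 := congrFun (congrFun h 0) 2
  have h11 := congrFun (congrFun h 1) 1
  simp [magicOf] at h00 h02 h11
  omega

theorem injective_magicOf_iff (a b c : ℤ) :
    Function.Injective (fun p : Fin 3 × Fin 3 => magicOf a b c p.1 p.2) ↔
      0 < a.natAbs ∧ 0 < b.natAbs ∧ a.natAbs ≠ b.natAbs ∧ a.natAbs ≠ 2 * b.natAbs ∧
        b.natAbs ≠ 2 * a.natAbs := by
  constructor
  · intro hinj
    have hne (p q : Fin 3 × Fin 3) (hpq : p ≠ q) : magicOf a b c p.1 p.2 ≠ magicOf a b c q.1 q.2 :=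
      fun h => hpq (hinj h)
    have := hne (0, 0) (1, 1) (by decide)
    have := hne (0, 2) (1, 1) (by decide)
    have := hne (0, 0) (0, 2) (by decide)
    have := hne (0, 0) (2, 0) (by decide)
    have := hne (1, 2) (0, 2) (by decide)
    have := hne (2, 1) (2, 0) (by decide)
    have := hne (1, 0) (0, 0) (by decide)
    have := hne (2, 1) (2, 2) (by decide)
    simp [magicOf] at *
    omega
  · intro h p q hpq
    fin_cases p <;> fin_cases q <;> simp [magicOf] at hpq ⊢ <;> omega

theorem magicOf_bounds_iff (a b c t : ℤ) :
    (∀ i j, 0 < magicOf a b c i j ∧ magicOf a b c i j < t) ↔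
      a.natAbs + b.natAbs < c ∧ c + a.natAbs + b.natAbs < t := by
  constructor
  · intro h
    have h01 := h 0 1; have h10 := h 1 0; have h12 := h 1 2; have h21 := h 2 1
    simp [magicOf] at h01 h10 h12 h21
    omega
  · intro h i j
    fin_cases i <;> fin_cases j <;> simp [magicOf] <;> omega

def magicParams (t : ℕ) : Finset ((ℕ × ℕ) × ℕ) :=
  ((range t ×ˢ range t) ×ˢ range t).filter fun x =>
    0 < x.1.1 ∧ 0 < x.1.2 ∧ x.1.1 ≠ x.1.2 ∧ x.1.1 ≠ 2 * x.1.2 ∧ x.1.2 ≠ 2 * x.1.1 ∧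
      x.1.1 + x.1.2 < x.2 ∧ x.2 + x.1.1 + x.1.2 < t

theorem mem_magicParams {t p q c : ℕ} :
    ((p, q), c) ∈ magicParams t ↔
      0 < p ∧ 0 < q ∧ p ≠ q ∧ p ≠ 2 * q ∧ q ≠ 2 * p ∧ p + q < c ∧ c + p + q < t := by
  simp only [magicParams, mem_filter, mem_product, mem_range]
  omega

theorem isBoundedMagicSquare3_iff {t : ℕ} {M : Matrix (Fin 3) (Fin 3) ℕ} :
    IsBoundedMagicSquare3 t M ↔
      ∃ (a b : ℤ) (c : ℕ), M.map ((↑) : ℕ → ℤ) = magicOf a b c ∧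
        ((a.natAbs, b.natAbs), c) ∈ magicParams t := by
  have entries {N : Matrix (Fin 3) (Fin 3) ℤ} (hN : M.map ((↑) : ℕ → ℤ) = N) (i j : Fin 3) :
      (M i j : ℤ) = N i j := by
    rw [← hN, Matrix.map_apply]
  have injective_iff {N : Matrix (Fin 3) (Fin 3) ℤ} (hN : M.map ((↑) : ℕ → ℤ) = N) :
      (Function.Injective fun p : Fin 3 × Fin 3 => M p.1 p.2) ↔
        Function.Injective fun p : Fin 3 × Fin 3 => N p.1 p.2 := by
    rw [← (Nat.cast_injective (R := ℤ)).of_comp_iff]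
    exact iff_of_eq (congrArg _ (funext fun p => entries hN p.1 p.2))
  constructor
  · rintro ⟨hbound, hinj, s, hs⟩
    have hN := (isMagic_map_natCast.mpr hs).eq_magicOf
    simp only [Matrix.map_apply] at hN
    refine ⟨_, _, M 1 1, hN, ?_⟩
    have hdistinct := (injective_magicOf_iff _ _ _).mp ((injective_iff hN).mp hinj)
    have hbounds := (magicOf_bounds_iff _ _ (M 1 1) t).mp fun i j => by
      rw [← entries hN]
      exact_mod_cast hbound i j
    rw [mem_magicParams]
    omega
  · rintro ⟨a, b, c, hN, hp⟩
    rw [mem_magicParams] at hp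
    refine ⟨fun i j => ?_, (injective_iff hN).mpr ((injective_magicOf_iff a b c).mpr (by omega)),
      3 * c, isMagic_map_natCast.mp ?_⟩
    · have := (magicOf_bounds_iff a b c t).mpr (by omega) i j
      rw [← entries hN] at this
      exact_mod_cast this
    · rw [hN]
      exact_mod_cast isMagic_magicOf a b c

def signed (e : Bool) (n : ℕ) : ℤ := bif e then (n : ℤ) else -(n : ℤ)

theorem natAbs_signed (e : Bool) (n : ℕ) : (signed e n).natAbs = n := by
  cases e <;> simp [signed]

theorem signed_decide_pos_natAbs (a : ℤ) : signed (decide (0 < a)) a.natAbs = a := by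
  by_cases h : 0 < a <;>
    simp only [signed, h, decide_true, decide_false, cond_true, cond_false] <;> omega

theorem signed_inj {e e' : Bool} {n n' : ℕ} (hn : 0 < n) :
    signed e n = signed e' n' ↔ e = e' ∧ n = n' := by
  cases e <;> cases e' <;> simp [signed] <;> omega

def squareOf (x : (Bool × Bool) × (ℕ × ℕ) × ℕ) : Matrix (Fin 3) (Fin 3) ℕ :=
  (magicOf (signed x.1.1 x.2.1.1) (signed x.1.2 x.2.1.2) x.2.2).map Int.toNat

theorem map_natCast_squareOf {t p q c : ℕ} (e : Bool × Bool) (hx : ((p, q), c) ∈ magicParams t) :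
    (squareOf (e, (p, q), c)).map ((↑) : ℕ → ℤ) = magicOf (signed e.1 p) (signed e.2 q) c := by
  rw [mem_magicParams] at hx
  have hpos := (magicOf_bounds_iff (signed e.1 p) (signed e.2 q) c t).mpr
    (by simp only [natAbs_signed]; omega)
  ext i j
  simp only [squareOf, Matrix.map_apply]
  exact Int.toNat_of_nonneg (hpos i j).1.le

theorem c3_eq_four_mul_card_magicParams (t : ℕ) : c3 t = 4 * #(magicParams t) := by
  have hinj : Set.InjOn squareOf (univ ×ˢ magicParams t : Finset ((Bool × Bool) × _)) := by
    rintro ⟨⟨e₁, e₂⟩, ⟨p, q⟩, c⟩ hx ⟨⟨e₁', e₂'⟩, ⟨p', q'⟩, c'⟩ hx' h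
    simp only [coe_product, coe_univ, Set.mem_prod, Set.mem_univ, true_and, mem_coe] at hx hx'
    have h' := congrArg (Matrix.map · ((↑) : ℕ → ℤ)) h
    simp only [map_natCast_squareOf _ hx, map_natCast_squareOf _ hx'] at h'
    obtain ⟨ha, hb, hc⟩ := magicOf_inj.mp h'
    rw [mem_magicParams] at hx
    rw [signed_inj hx.1] at ha
    rw [signed_inj hx.2.1] at hb
    simp_all
  have himage : {M | IsBoundedMagicSquare3 t M} = ↑((univ ×ˢ magicParams t).image squareOf) := by
    ext M
    simp only [Set.mem_ofPred_eq, coe_image, Set.mem_image, mem_coe, mem_product, mem_univ,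
      true_and, isBoundedMagicSquare3_iff]
    constructor
    · rintro ⟨a, b, c, hM, hp⟩
      refine ⟨((decide (0 < a), decide (0 < b)), (a.natAbs, b.natAbs), c), hp, ?_⟩
      ext i j
      have := congrFun (congrFun (map_natCast_squareOf (decide (0 < a), decide (0 < b)) hp) i) j
      rw [signed_decide_pos_natAbs, signed_decide_pos_natAbs, ← hM] at this
      simpa using this
    · rintro ⟨⟨e, ⟨p, q⟩, c⟩, hx, rfl⟩
      refine ⟨_, _, c, map_natCast_squareOf e hx, ?_⟩
      simpa only [natAbs_signed] using hx
  rw [c3, himage, Set.ncard_coe_finset, card_image_of_injOn hinj, card_product, card_univ,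
    Fintype.card_prod, Fintype.card_bool]

def trianglePairs (m : ℕ) : Finset (ℕ × ℕ) :=
  (Icc 1 m ×ˢ Icc 1 m).filter fun x => x.1 + x.2 ≤ m

theorem mem_trianglePairs {m : ℕ} {x : ℕ × ℕ} :
    x ∈ trianglePairs m ↔ 1 ≤ x.1 ∧ 1 ≤ x.2 ∧ x.1 + x.2 ≤ m := by
  simp only [trianglePairs, mem_filter, mem_product, mem_Icc]
  omega

def admissiblePairs (m : ℕ) : Finset (ℕ × ℕ) :=
  (trianglePairs m).filter fun x => x.1 ≠ x.2 ∧ x.1 ≠ 2 * x.2 ∧ x.2 ≠ 2 * x.1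

theorem card_magicParams (t : ℕ) :
    #(magicParams t) = ∑ x ∈ admissiblePairs ((t - 2) / 2), (t - 1 - 2 * (x.1 + x.2)) := by
  rw [card_eq_sum_ones, sum_finset_product _ _ fun x => Ioo (x.1 + x.2) (t - x.1 - x.2)]
  · refine sum_congr rfl fun x _ => ?_
    rw [← card_eq_sum_ones, Nat.card_Ioo]
    omega
  · rintro ⟨⟨p, q⟩, c⟩
    simp only [mem_magicParams, admissiblePairs, mem_filter, mem_trianglePairs, mem_Ioo]
    omega

theorem sum_admissiblePairs {M : Type*} [AddCommGroup M] (m : ℕ) (f : ℕ × ℕ → M) :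
    ∑ x ∈ admissiblePairs m, f x =
      ∑ x ∈ trianglePairs m, f x - ∑ x ∈ trianglePairs m with x.1 = x.2, f x
        - ∑ x ∈ trianglePairs m with x.1 = 2 * x.2, f x
        - ∑ x ∈ trianglePairs m with x.2 = 2 * x.1, f x := by
  simp only [admissiblePairs, sum_filter, ← sum_sub_distrib]
  refine sum_congr rfl fun x hx => ?_
  rw [mem_trianglePairs] at hx
  -- the three lines meet only at the origin, which is not in the triangle
  split_ifs <;> first | omega | abel

theorem sum_trianglePairs (w : ℚ) (m : ℕ) :
    ∑ x ∈ trianglePairs m, (w - 2 * ((x.1 + x.2 : ℕ) : ℚ)) =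
      m * (m - 1) * (3 * w - 4 * m - 4) / 6 := by
  induction m with
  | zero => simp [trianglePairs]
  | succ m ih =>
    rw [← sum_filter_add_sum_filter_not _ fun x => x.1 + x.2 ≤ m]
    have hlower : (trianglePairs (m + 1)).filter (fun x => x.1 + x.2 ≤ m) = trianglePairs m := by
      ext x
      simp only [mem_filter, mem_trianglePairs]
      omega
    have htop : (trianglePairs (m + 1)).filter (fun x => ¬ x.1 + x.2 ≤ m) =
        (Icc 1 m).image fun p => (p, m + 1 - p) := by
      ext ⟨p, q⟩
      simp only [mem_filter, mem_trianglePairs, mem_image, mem_Icc, Prod.mk.injEq]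
      constructor
      · intro h
        exact ⟨p, by omega⟩
      · rintro ⟨p', hp', rfl, rfl⟩
        omega
    rw [hlower, ih, htop, sum_image fun p _ p' _ h => (Prod.mk.inj h).1]
    have hconst : ∀ p ∈ Icc 1 m, (w - 2 * ((p + (m + 1 - p) : ℕ) : ℚ)) = w - 2 * (m + 1) := by
      intro p hp
      rw [mem_Icc] at hp
      rw [show p + (m + 1 - p) = m + 1 by omega]
      push_cast
      ring
    rw [sum_congr rfl hconst, sum_const, Nat.card_Icc, nsmul_eq_mul]
    push_cast
    ring

theorem sum_trianglePairs_filter_fst_eq_mul {M : Type*} [AddCommMonoid M] {a : ℕ} (ha : 0 < a)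
    (m : ℕ) (g : ℕ → M) :
    ∑ x ∈ trianglePairs m with x.1 = a * x.2, g (x.1 + x.2) =
      ∑ q ∈ Icc 1 (m / (a + 1)), g ((a + 1) * q) := by
  refine sum_nbij' (fun x => x.2) (fun q => (a * q, q)) ?_ ?_ ?_ ?_ ?_
  · rintro ⟨p, q⟩ hx
    simp only [mem_filter, mem_trianglePairs] at hx
    rw [mem_Icc, Nat.le_div_iff_mul_le (by omega)]
    constructor
    · omega
    · nlinarith
  · intro q hq
    rw [mem_Icc, Nat.le_div_iff_mul_le (by omega)] at hq
    simp only [mem_filter, mem_trianglePairs, and_true]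
    exact ⟨Nat.mul_pos ha hq.1, hq.1, by nlinarith⟩
  · rintro ⟨p, q⟩ hx
    simp only [mem_filter] at hx
    simp [hx.2]
  · intro q _
    rfl
  · rintro ⟨p, q⟩ hx
    simp only [mem_filter] at hx
    simp only [hx.2]
    congr 1
    ring

theorem sum_trianglePairs_filter_snd_eq_mul {M : Type*} [AddCommMonoid M] {a : ℕ} (ha : 0 < a)
    (m : ℕ) (g : ℕ → M) :
    ∑ x ∈ trianglePairs m with x.2 = a * x.1, g (x.1 + x.2) =
      ∑ q ∈ Icc 1 (m / (a + 1)), g ((a + 1) * q) := by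
  rw [← sum_trianglePairs_filter_fst_eq_mul ha]
  refine sum_nbij' Prod.swap Prod.swap ?_ ?_ (fun _ _ => rfl) (fun _ _ => rfl) ?_
  all_goals simp only [mem_filter, mem_trianglePairs, Prod.fst_swap, Prod.snd_swap]
  · intro x hx; omega
  · intro x hx; omega
  · intro x _; rw [add_comm]

theorem sum_Icc_sub_mul (w d : ℚ) (n : ℕ) :
    ∑ q ∈ Icc 1 n, (w - d * q) = n * w - d * (n * (n + 1) / 2) := by
  induction n with
  | zero => simp
  | succ n ih =>
    rw [sum_Icc_succ_top (by omega), ih]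
    push_cast
    ring

theorem cast_c3_eq {t m : ℕ} (hm : (t - 2) / 2 = m) :
    (c3 t : ℚ) = 4 * (m * (m - 1) * (3 * t - 4 * m - 7) / 6
      - (m / 2 : ℕ) * (t - 1 - 2 * ((m / 2 : ℕ) + 1))
      - 2 * (m / 3 : ℕ) * (t - 1 - 3 * ((m / 3 : ℕ) + 1))) := by
  have hcast : ((∑ x ∈ admissiblePairs m, (t - 1 - 2 * (x.1 + x.2)) : ℕ) : ℚ) =
      ∑ x ∈ admissiblePairs m, ((t - 1 : ℚ) - 2 * ((x.1 + x.2 : ℕ) : ℚ)) := by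
    rw [Nat.cast_sum]
    refine sum_congr rfl fun x hx => ?_
    simp only [admissiblePairs, mem_filter, mem_trianglePairs] at hx
    rw [Nat.cast_sub (by omega), Nat.cast_sub (by omega)]
    push_cast
    ring
  have hline (d n : ℕ) : ∑ q ∈ Icc 1 n, ((t - 1 : ℚ) - 2 * ((d * q : ℕ) : ℚ)) =
      n * (t - 1) - 2 * d * (n * (n + 1) / 2) := by
    simp only [Nat.cast_mul, ← mul_assoc]
    exact sum_Icc_sub_mul _ _ n
  have hdiag := sum_trianglePairs_filter_fst_eq_mul one_pos m
    fun s : ℕ => (t - 1 : ℚ) - 2 * (s : ℚ)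
  have hfst := sum_trianglePairs_filter_fst_eq_mul two_pos m
    fun s : ℕ => (t - 1 : ℚ) - 2 * (s : ℚ)
  have hsnd := sum_trianglePairs_filter_snd_eq_mul two_pos m
    fun s : ℕ => (t - 1 : ℚ) - 2 * (s : ℚ)
  simp only [one_mul, Nat.reduceAdd] at hdiag hfst hsnd
  rw [c3_eq_four_mul_card_magicParams, card_magicParams, hm, Nat.cast_mul, hcast,
    sum_admissiblePairs, sum_trianglePairs, hdiag, hfst, hsnd, hline, hline]
  push_cast
  ring

theorem c3_formula_mod12_7_general (t : ℕ) (h : t % 12 = 7) :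
    (c3 t : ℚ) = ((t : ℚ) ^ 3 - 16 * (t : ℚ) ^ 2 + 73 * (t : ℚ) - 70) / 6 := by
  obtain ⟨k, rfl⟩ : ∃ k, t = 12 * k + 7 := ⟨t / 12, by omega⟩
  rw [cast_c3_eq (m := 6 * k + 2) (by omega), show (6 * k + 2) / 2 = 3 * k + 1 by omega,
    show (6 * k + 2) / 3 = 2 * k by omega]
  push_cast
  ring

theorem c3_formula_mod12_7 (t : ℕ) (ht : 0 < t) (h : t % 12 = 7) :
    (c3 t : ℚ) = ((t : ℚ) ^ 3 - 16 * (t : ℚ) ^ 2 + 73 * (t : ℚ) - 70) / 6 :=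
  c3_formula_mod12_7_general t h
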